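/- arXiv:1004.1268 — 4 statements merged into one kernel-verified Lean document; each statement's English description precedes it below -/
import Mathlib

section
/- The connection with coefficients Γ^μ_{νλ}(x) = −(x_ν δ^μ_λ + δ^μ_ν x_λ)/(x·x), defined on the open set {x ∈ ℝ⁴ : x·x ≠ 0}, is compatible with the degenerate metric tensor g⁻_{μν} = −(l²/(x·x)²)(η_{μρ}η_{ντ} − η_{μν}η_{ρτ})x^ρx^τ, i.e., ∂_λ g_{μν} − Γ^κ_{λν}g_{μκ} − Γ^κ_{μλ}g_{κν} = 0 for all μ, ν, λ. -/
open scoped BigOperators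

/-- Sign of the Minkowski metric η = diag(1,-1,-1,-1). -/
def etaS (μ : Fin 4) : ℝ := if μ = 0 then 1 else -1

/-- Minkowski metric components η_{μν}. -/
def etaM (μ ν : Fin 4) : ℝ := if μ = ν then etaS μ else 0

/-- Minkowski inner product x·y = η_{μν}x^μy^ν. -/
def mdot (x y : Fin 4 → ℝ) : ℝ := ∑ μ, etaS μ * x μ * y μ

/-- Lowered components x_μ = η_{μν}x^ν. -/
def lowerIdx (x : Fin 4 → ℝ) (μ : Fin 4) : ℝ := etaS μ * x μ

/-- Connection coefficients Γ^μ_{νλ}(x) = −(x_ν δ^μ_λ + δ^μ_ν x_λ)/(x·x). -/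
noncomputable def Gam (x : Fin 4 → ℝ) (μ ν lam : Fin 4) : ℝ :=
  -((lowerIdx x ν) * (if μ = lam then (1:ℝ) else 0)
    + (if μ = ν then (1:ℝ) else 0) * lowerIdx x lam) / mdot x x

/-- The degenerate metric, sign `s`: g_{μν} = s·(l²/(x·x)²)(η_{μρ}η_{ντ} − η_{μν}η_{ρτ})x^ρx^τ. -/
noncomputable def gten (l s : ℝ) (x : Fin 4 → ℝ) (μ ν : Fin 4) : ℝ :=
  s * (l ^ 2 / (mdot x x) ^ 2) *
    ∑ ρ, ∑ τ, (etaM μ ρ * etaM ν τ - etaM μ ν * etaM ρ τ) * x ρ * x τ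

/-- The degenerate (2,0)-tensor h^{μν} = l⁻⁴(x·x)x^μx^ν. -/
noncomputable def hten (l : ℝ) (x : Fin 4 → ℝ) (μ ν : Fin 4) : ℝ :=
  (1 / l ^ 4) * mdot x x * x μ * x ν

/-- Partial derivative ∂_μ f at x. -/
noncomputable def pd (f : (Fin 4 → ℝ) → ℝ) (μ : Fin 4) (x : Fin 4 → ℝ) : ℝ :=
  fderiv ℝ f x (Pi.single μ 1)

/-!
With `Q = x·x`, the metric is `g_{μν} = s l² (x_μ x_ν − η_{μν} Q) / Q²` and contracting `Γ^κ_{ab}`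
against a covector `f_κ` gives `−(x_a f_b + x_b f_a) / Q`. Everything is therefore rational in the
`x_μ` and `Q`, and since `∂_λ x_μ = η_{μλ}` and `∂_λ Q = 2 x_λ`, compatibility becomes a polynomial
identity after clearing `Q⁴`. The sign `s` factors out, so the identity holds for `g⁺` as well as `g⁻`.
-/

theorem etaM_comm (μ ν : Fin 4) : etaM μ ν = etaM ν μ := by
  unfold etaM; split_ifs with h h' h' <;> simp_all

theorem lowerIdx_add_smul (x v : Fin 4 → ℝ) (t : ℝ) (μ : Fin 4) :
    lowerIdx (x + t • v) μ = lowerIdx x μ + t * lowerIdx v μ := by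
  simp only [lowerIdx, Pi.add_apply, Pi.smul_apply, smul_eq_mul]; ring

theorem lowerIdx_single (μ lam : Fin 4) : lowerIdx (Pi.single lam 1) μ = etaM μ lam := by
  by_cases h : μ = lam <;> simp [lowerIdx, etaM, h]

theorem mdot_single_right (x : Fin 4 → ℝ) (lam : Fin 4) :
    mdot x (Pi.single lam 1) = lowerIdx x lam := by
  simp [mdot, lowerIdx, Pi.single_apply]

theorem mdot_add_smul_self (x v : Fin 4 → ℝ) (t : ℝ) :
    mdot (x + t • v) (x + t • v) = mdot x x + 2 * t * mdot x v + t ^ 2 * mdot v v := by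
  simp only [mdot, Pi.add_apply, Pi.smul_apply, smul_eq_mul, Finset.mul_sum, ← Finset.sum_add_distrib]
  congr 1; ext; ring

theorem sum_etaM_mul (x : Fin 4 → ℝ) (μ : Fin 4) : ∑ ρ, etaM μ ρ * x ρ = lowerIdx x μ := by
  simp [etaM, lowerIdx]

theorem sum_sum_etaM_mul (x : Fin 4 → ℝ) : ∑ ρ, ∑ τ, etaM ρ τ * x ρ * x τ = mdot x x := by
  simp [etaM, mdot, ite_mul]

theorem sum_sum_gten_summand (x : Fin 4 → ℝ) (μ ν : Fin 4) :
    ∑ ρ, ∑ τ, (etaM μ ρ * etaM ν τ - etaM μ ν * etaM ρ τ) * x ρ * x τ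
      = lowerIdx x μ * lowerIdx x ν - etaM μ ν * mdot x x := by
  rw [← sum_etaM_mul, ← sum_etaM_mul, ← sum_sum_etaM_mul, Finset.sum_mul_sum, Finset.mul_sum,
    ← Finset.sum_sub_distrib]
  refine Finset.sum_congr rfl fun ρ _ => ?_
  rw [Finset.mul_sum, ← Finset.sum_sub_distrib]
  exact Finset.sum_congr rfl fun τ _ => by ring

theorem gten_eq_div (l s : ℝ) (x : Fin 4 → ℝ) (μ ν : Fin 4) :
    gten l s x μ ν
      = s * l ^ 2 * (lowerIdx x μ * lowerIdx x ν - etaM μ ν * mdot x x) / mdot x x ^ 2 := by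
  rw [gten, sum_sum_gten_summand]; ring

theorem sum_Gam_mul (x : Fin 4 → ℝ) (a b : Fin 4) (f : Fin 4 → ℝ) :
    ∑ κ, Gam x κ a b * f κ = -(lowerIdx x a * f b + lowerIdx x b * f a) / mdot x x := by
  simp only [Gam, div_eq_mul_inv, neg_mul, add_mul, ite_mul, mul_ite, one_mul, mul_one, zero_mul,
    mul_zero, neg_add_rev, Finset.sum_add_distrib, Finset.sum_neg_distrib, Finset.sum_ite_eq',
    Finset.mem_univ, ↓reduceIte]
  ring

theorem differentiableAt_gten (l s : ℝ) {x : Fin 4 → ℝ} (hx : mdot x x ≠ 0) (μ ν : Fin 4) :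
    DifferentiableAt ℝ (fun p => gten l s p μ ν) x := by
  simp only [gten, mdot]
  fun_prop (disch := exact pow_ne_zero _ hx)

theorem pd_eq_of_hasDerivAt_line {f : (Fin 4 → ℝ) → ℝ} {x : Fin 4 → ℝ} {μ : Fin 4} {c : ℝ}
    (hf : DifferentiableAt ℝ f x) (h : HasDerivAt (fun t : ℝ => f (x + t • Pi.single μ 1)) c 0) :
    pd f μ x = c := by
  rw [pd, ← hf.lineDeriv_eq_fderiv]
  exact h.deriv

theorem hasDerivAt_lowerIdx_line (x v : Fin 4 → ℝ) (μ : Fin 4) :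
    HasDerivAt (fun t : ℝ => lowerIdx (x + t • v) μ) (lowerIdx v μ) 0 := by
  simp only [lowerIdx_add_smul]
  simpa using ((hasDerivAt_id (0 : ℝ)).mul_const (lowerIdx v μ)).const_add (lowerIdx x μ)

theorem hasDerivAt_mdot_line (x v : Fin 4 → ℝ) :
    HasDerivAt (fun t : ℝ => mdot (x + t • v) (x + t • v)) (2 * mdot x v) 0 := by
  simp only [mdot_add_smul_self]
  have h := (((hasDerivAt_id' (0 : ℝ)).const_mul 2).mul_const (mdot x v)).const_add (mdot x x)
    |>.fun_add ((hasDerivAt_pow 2 (0 : ℝ)).mul_const (mdot v v))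
  exact h.congr_deriv (by norm_num)

theorem hasDerivAt_gten_line (l s : ℝ) {x : Fin 4 → ℝ} (hx : mdot x x ≠ 0) (v : Fin 4 → ℝ)
    (μ ν : Fin 4) :
    HasDerivAt (fun t : ℝ => gten l s (x + t • v) μ ν)
      (s * l ^ 2 * ((lowerIdx v μ * lowerIdx x ν + lowerIdx x μ * lowerIdx v ν
          - 2 * etaM μ ν * mdot x v) / mdot x x ^ 2
        - 4 * mdot x v * (lowerIdx x μ * lowerIdx x ν - etaM μ ν * mdot x x) / mdot x x ^ 3)) 0 := by
  simp only [gten_eq_div]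
  have hQ := hasDerivAt_mdot_line x v
  have hN := (((hasDerivAt_lowerIdx_line x v μ).fun_mul (hasDerivAt_lowerIdx_line x v ν)).fun_sub
    (hQ.const_mul (etaM μ ν))).const_mul (s * l ^ 2)
  have hx0 : mdot (x + (0 : ℝ) • v) (x + (0 : ℝ) • v) ^ 2 ≠ 0 := by simpa using pow_ne_zero 2 hx
  refine (hN.fun_div (hQ.fun_pow 2) hx0).congr_deriv ?_
  simp only [zero_smul, add_zero]
  field_simp
  ring

theorem pd_gten (l s : ℝ) {x : Fin 4 → ℝ} (hx : mdot x x ≠ 0) (μ ν lam : Fin 4) :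
    pd (fun p => gten l s p μ ν) lam x
      = s * l ^ 2 * ((etaM μ lam * lowerIdx x ν + lowerIdx x μ * etaM ν lam
          - 2 * etaM μ ν * lowerIdx x lam) / mdot x x ^ 2
        - 4 * lowerIdx x lam * (lowerIdx x μ * lowerIdx x ν - etaM μ ν * mdot x x) / mdot x x ^ 3) := by
  have h := hasDerivAt_gten_line l s hx (Pi.single lam 1) μ ν
  simp only [lowerIdx_single, mdot_single_right] at h
  exact pd_eq_of_hasDerivAt_line (differentiableAt_gten l s hx μ ν) h

theorem gten_compatible (l s : ℝ) {x : Fin 4 → ℝ} (hx : mdot x x ≠ 0) (μ ν lam : Fin 4) :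
    pd (fun p => gten l s p μ ν) lam x
      - (∑ κ, Gam x κ lam ν * gten l s x μ κ)
      - (∑ κ, Gam x κ μ lam * gten l s x κ ν) = 0 := by
  rw [pd_gten l s hx, sum_Gam_mul, sum_Gam_mul]
  simp only [gten_eq_div, etaM_comm lam ν]
  field_simp
  ring

theorem connection_compatible_g_general (l : ℝ) :
    ∀ x : Fin 4 → ℝ, mdot x x ≠ 0 → ∀ μ ν lam : Fin 4,
      pd (fun p => gten l (-1) p μ ν) lam x
        - (∑ κ, Gam x κ lam ν * gten l (-1) x μ κ)
        - (∑ κ, Gam x κ μ lam * gten l (-1) x κ ν) = 0 :=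
  fun _ hx => gten_compatible l (-1) hx

/-- The connection Γ is compatible with the degenerate metric g⁻:
∂_λ g_{μν} − Γ^κ_{λν}g_{μκ} − Γ^κ_{μλ}g_{κν} = 0 on {x·x ≠ 0}. -/
theorem connection_compatible_g (l : ℝ) (hl : 0 < l) :
    ∀ x : Fin 4 → ℝ, mdot x x ≠ 0 → ∀ μ ν lam : Fin 4,
      pd (fun p => gten l (-1) p μ ν) lam x
        - (∑ κ, Gam x κ lam ν * gten l (-1) x μ κ)
        - (∑ κ, Gam x κ μ lam * gten l (-1) x κ ν) = 0 :=
  connection_compatible_g_general l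
end

section
/- The connection with coefficients Γ^μ_{νλ}(x) = −(x_ν δ^μ_λ + δ^μ_ν x_λ)/(x·x) is compatible with the degenerate (2,0)-tensor field h^{μν} = l⁻⁴(x·x)x^μx^ν, i.e., ∂_λ h^{μν} + Γ^ν_{λκ}h^{μκ} + Γ^μ_{λκ}h^{κν} = 0 for all μ, ν, λ on {x ∈ ℝ⁴ : x·x ≠ 0}. -/
open scoped BigOperators

/-! Writing `h^{μν} = l⁻⁴ Q x^μ x^ν` with `Q = x·x`, the derivative is
`∂_λ h^{μν} = l⁻⁴ (2 x_λ x^μ x^ν + Q (δ^μ_λ x^ν + x^μ δ^ν_λ))`, while contracting the connection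
with the position vector gives `Γ^ν_{λκ} x^κ = -(x_λ x^ν / Q + δ^ν_λ)`. Each connection term is
therefore `-l⁻⁴ (x_λ x^μ x^ν + Q x^μ δ^ν_λ)` (resp. with `μ, ν` exchanged), and the three terms
cancel. -/

section PartialDerivative

variable {f g : (Fin 4 → ℝ) → ℝ} {x : Fin 4 → ℝ}

lemma pd_mul (hf : DifferentiableAt ℝ f x) (hg : DifferentiableAt ℝ g x) (μ : Fin 4) :
    pd (fun p => f p * g p) μ x = f x * pd g μ x + g x * pd f μ x := by
  simp only [pd, fderiv_fun_mul hf hg, add_apply, smul_apply,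
    smul_eq_mul]

lemma pd_const_mul (hf : DifferentiableAt ℝ f x) (c : ℝ) (μ : Fin 4) :
    pd (fun p => c * f p) μ x = c * pd f μ x := by
  simp only [pd, fderiv_const_mul hf, smul_apply, smul_eq_mul]

lemma pd_sum {ι : Type*} (s : Finset ι) {F : ι → (Fin 4 → ℝ) → ℝ}
    (hF : ∀ i ∈ s, DifferentiableAt ℝ (F i) x) (μ : Fin 4) :
    pd (fun p => ∑ i ∈ s, F i p) μ x = ∑ i ∈ s, pd (F i) μ x := by
  simp only [pd, fderiv_fun_sum hF, sum_apply]

lemma pd_apply (ν μ : Fin 4) (x : Fin 4 → ℝ) :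
    pd (fun p => p ν) μ x = if ν = μ then 1 else 0 := by
  simp only [pd, (hasFDerivAt_apply ν x).fderiv, ContinuousLinearMap.proj_apply, Pi.single_apply]

end PartialDerivative

lemma differentiable_mdot_self : Differentiable ℝ (fun p : Fin 4 → ℝ => mdot p p) := by
  unfold mdot
  fun_prop

lemma pd_mdot_self (μ : Fin 4) (x : Fin 4 → ℝ) :
    pd (fun p => mdot p p) μ x = 2 * lowerIdx x μ := by
  have hterm : ∀ κ : Fin 4, pd (fun p => etaS κ * (p κ * p κ)) μ x
      = 2 * etaS κ * x κ * if κ = μ then 1 else 0 := by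
    intro κ
    rw [pd_const_mul (by fun_prop), pd_mul (by fun_prop) (by fun_prop), pd_apply]
    ring
  simp_rw [mdot, mul_assoc]
  rw [pd_sum _ fun κ _ => by fun_prop]
  simp only [hterm, mul_ite, mul_one, mul_zero, Finset.sum_ite_eq', Finset.mem_univ, if_true,
    lowerIdx]
  ring

lemma pd_hten (l : ℝ) (x : Fin 4 → ℝ) (μ ν lam : Fin 4) :
    pd (fun p => hten l p μ ν) lam x
      = (1 / l ^ 4) * (2 * lowerIdx x lam * x μ * x ν
          + mdot x x * ((if μ = lam then 1 else 0) * x ν + x μ * if ν = lam then 1 else 0)) := by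
  have hQ := differentiable_mdot_self x
  unfold hten
  rw [pd_mul (by fun_prop) (by fun_prop), pd_mul (by fun_prop) (by fun_prop),
    pd_const_mul hQ, pd_mdot_self, pd_apply, pd_apply]
  ring

lemma sum_lowerIdx_mul_self (x : Fin 4 → ℝ) : ∑ κ, lowerIdx x κ * x κ = mdot x x := by
  simp only [lowerIdx, mdot]

lemma sum_Gam_mul_self {x : Fin 4 → ℝ} (hQ : mdot x x ≠ 0) (ν lam : Fin 4) :
    ∑ κ, Gam x ν lam κ * x κ = -(lowerIdx x lam * x ν / mdot x x + if ν = lam then 1 else 0) := by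
  have hterm : ∀ κ, Gam x ν lam κ * x κ
      = -((lowerIdx x lam / mdot x x) * ((if ν = κ then 1 else 0) * x κ)
        + ((if ν = lam then 1 else 0) / mdot x x) * (lowerIdx x κ * x κ)) := by
    intro κ
    unfold Gam
    ring
  simp only [hterm, Finset.sum_neg_distrib, Finset.sum_add_distrib, ← Finset.mul_sum,
    sum_lowerIdx_mul_self, ite_mul, one_mul, zero_mul, Finset.sum_ite_eq, Finset.mem_univ,
    if_true]
  field_simp

theorem connection_compatible_h_general (l : ℝ) :
    ∀ x : Fin 4 → ℝ, mdot x x ≠ 0 → ∀ μ ν lam : Fin 4,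
      pd (fun p => hten l p μ ν) lam x
        + (∑ κ, Gam x ν lam κ * hten l x μ κ)
        + (∑ κ, Gam x μ lam κ * hten l x κ ν) = 0 := by
  intro x hQ μ ν lam
  have hleft : ∑ κ, Gam x ν lam κ * hten l x μ κ
      = (1 / l ^ 4) * mdot x x * x μ * ∑ κ, Gam x ν lam κ * x κ := by
    rw [Finset.mul_sum]
    exact Finset.sum_congr rfl fun κ _ => by unfold hten; ring
  have hright : ∑ κ, Gam x μ lam κ * hten l x κ ν
      = (1 / l ^ 4) * mdot x x * x ν * ∑ κ, Gam x μ lam κ * x κ := by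
    rw [Finset.mul_sum]
    exact Finset.sum_congr rfl fun κ _ => by unfold hten; ring
  rw [pd_hten, hleft, hright, sum_Gam_mul_self hQ, sum_Gam_mul_self hQ]
  field_simp
  ring

/-- The connection Γ is compatible with the degenerate (2,0)-tensor h:
∂_λ h^{μν} + Γ^ν_{λκ}h^{μκ} + Γ^μ_{λκ}h^{κν} = 0 on {x·x ≠ 0}. -/
theorem connection_compatible_h (l : ℝ) (hl : 0 < l) :
    ∀ x : Fin 4 → ℝ, mdot x x ≠ 0 → ∀ μ ν lam : Fin 4,
      pd (fun p => hten l p μ ν) lam x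
        + (∑ κ, Gam x ν lam κ * hten l x μ κ)
        + (∑ κ, Gam x μ lam κ * hten l x κ ν) = 0 :=
  connection_compatible_h_general l
end

section
/- For the pseudo-translation vector field ξ = H' with components ξ^μ = −ν⁻²·(x⁰/c)·x^μ (i.e. H' = −ν⁻²t x^μ∂_μ) on {x·x ≠ 0}, the Lie derivative of h^{μν} = l⁻⁴(x·x)x^μx^ν vanishes: ℒ_ξ h^{μν} = h^{μν}{}_{,λ}ξ^λ − h^{μλ}∂_λξ^ν − h^{λν}∂_λξ^μ = 0. -/
open scoped BigOperators

/-- The pseudo-time-translation H' = −ν⁻²t x^μ∂_μ, in coordinates (x⁰ = ct, xⁱ),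
with ν = c/l and t = x⁰/c: components ξ^μ = −ν⁻²(x⁰/c)x^μ. -/
noncomputable def Hprime (c l : ℝ) : (Fin 4 → ℝ) → Fin 4 → ℝ := fun p =>
  (-(l ^ 2 / c ^ 2) * (p 0 / c)) • p

/-!
Write `ξ = φ • x` with `φ = -(l²/c²)(x⁰/c)` linear. Contracting a partial derivative with `x`
is the derivative along the ray through `x`, so Euler's identity for homogeneous functions gives
`h^{μν}_{,λ} ξ^λ = φ · 4h^{μν}` (`h` has degree 4) and, since `h^{μλ} = (l⁻⁴ (x·x) x^μ) x^λ`,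
`h^{μλ} ∂_λ ξ^ν = l⁻⁴ (x·x) x^μ · 2ξ^ν = 2φ h^{μν}` (`ξ^ν` has degree 2). Hence `4 - 2 - 2 = 0`.
-/

theorem fderiv_apply_self_of_homogeneous {E F : Type*} [NormedAddCommGroup E] [NormedSpace ℝ E]
    [NormedAddCommGroup F] [NormedSpace ℝ F] {f : E → F} {x : E} {k : ℕ}
    (hf : DifferentiableAt ℝ f x) (hom : ∀ t : ℝ, f (t • x) = t ^ k • f x) :
    fderiv ℝ f x x = (k : ℝ) • f x := by
  have hline : HasDerivAt (fun t : ℝ => t • x) x 1 := by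
    simpa using (hasDerivAt_id (1 : ℝ)).smul_const x
  have hray : HasDerivAt (fun t : ℝ => f (t • x)) (fderiv ℝ f x x) 1 :=
    hf.hasFDerivAt.comp_hasDerivAt_of_eq 1 hline (one_smul ℝ x).symm
  have hpow : HasDerivAt (fun t : ℝ => f (t • x)) ((k : ℝ) • f x) 1 := by
    simp_rw [hom]
    simpa using (hasDerivAt_pow k (1 : ℝ)).smul_const (f x)
  exact hray.unique hpow

theorem sum_pd_mul (f : (Fin 4 → ℝ) → ℝ) (x v : Fin 4 → ℝ) :
    ∑ lam, pd f lam x * v lam = fderiv ℝ f x v := by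
  conv_rhs => rw [pi_eq_sum_univ' v]
  simp [pd, map_sum, mul_comm]

theorem mdot_smul_smul (a b : ℝ) (x y : Fin 4 → ℝ) : mdot (a • x) (b • y) = a * b * mdot x y := by
  simp only [mdot, Pi.smul_apply, smul_eq_mul, Finset.mul_sum]
  exact Finset.sum_congr rfl fun _ _ => by ring

theorem hten_smul (l t : ℝ) (x : Fin 4 → ℝ) (μ ν : Fin 4) :
    hten l (t • x) μ ν = t ^ 4 * hten l x μ ν := by
  simp only [hten, mdot_smul_smul, Pi.smul_apply, smul_eq_mul]
  ring

theorem Hprime_smul (c l t : ℝ) (x : Fin 4 → ℝ) (ν : Fin 4) :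
    Hprime c l (t • x) ν = t ^ 2 * Hprime c l x ν := by
  simp only [Hprime, Pi.smul_apply, smul_eq_mul]
  ring

theorem differentiable_hten (l : ℝ) (μ ν : Fin 4) :
    Differentiable ℝ fun p => hten l p μ ν := by
  unfold hten mdot
  fun_prop

theorem differentiable_Hprime (c l : ℝ) (ν : Fin 4) :
    Differentiable ℝ fun p => Hprime c l p ν := by
  unfold Hprime
  fun_prop

theorem lie_derivative_h_Hprime_general (c l : ℝ) :
    ∀ x : Fin 4 → ℝ, mdot x x ≠ 0 → ∀ μ ν : Fin 4,
      (∑ lam, pd (fun p => hten l p μ ν) lam x * Hprime c l x lam)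
        - (∑ lam, hten l x μ lam * pd (fun p => Hprime c l p ν) lam x)
        - (∑ lam, hten l x lam ν * pd (fun p => Hprime c l p μ) lam x) = 0 := by
  intro x _ μ ν
  set φ := -(l ^ 2 / c ^ 2) * (x 0 / c)
  have euler_h := fderiv_apply_self_of_homogeneous (differentiable_hten l μ ν x) (k := 4)
    fun t => hten_smul l t x μ ν
  have euler_ξ (κ : Fin 4) :=
    fderiv_apply_self_of_homogeneous (differentiable_Hprime c l κ x) (k := 2)
      fun t => Hprime_smul c l t x κ
  have transport : ∑ lam, pd (fun p => hten l p μ ν) lam x * Hprime c l x lam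
      = φ * (4 * hten l x μ ν) := by
    rw [sum_pd_mul, show Hprime c l x = φ • x from rfl, map_smul, euler_h]
    simp
  have contract_dξ (κ : Fin 4) (a : ℝ) : ∑ lam, a * x lam * pd (fun p => Hprime c l p κ) lam x
      = a * (2 * Hprime c l x κ) := by
    simp_rw [mul_assoc, ← Finset.mul_sum, mul_comm (x _), sum_pd_mul, euler_ξ]
    simp
  have hten_row (lam : Fin 4) : hten l x μ lam = 1 / l ^ 4 * mdot x x * x μ * x lam := rfl
  have hten_col (lam : Fin 4) : hten l x lam ν = 1 / l ^ 4 * mdot x x * x ν * x lam := by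
    simp only [hten]; ring
  simp only [hten_row, hten_col, contract_dξ, transport]
  simp only [Hprime, Pi.smul_apply, smul_eq_mul]
  ring

/-- The Lie derivative of h along H' vanishes:
ℒ_ξ h^{μν} = h^{μν}{}_{,λ}ξ^λ − h^{μλ}∂_λξ^ν − h^{λν}∂_λξ^μ = 0 on {x·x ≠ 0}. -/
theorem lie_derivative_h_Hprime (c l : ℝ) (hc : 0 < c) (hl : 0 < l) :
    ∀ x : Fin 4 → ℝ, mdot x x ≠ 0 → ∀ μ ν : Fin 4,
      (∑ lam, pd (fun p => hten l p μ ν) lam x * Hprime c l x lam)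
        - (∑ lam, hten l x μ lam * pd (fun p => Hprime c l p ν) lam x)
        - (∑ lam, hten l x lam ν * pd (fun p => Hprime c l p μ) lam x) = 0 :=
  lie_derivative_h_Hprime_general c l
end

section
/- Under the coordinate change x⁰ = l²ρ⁻¹sinh(ψ/l), x¹ = l²ρ⁻¹cosh(ψ/l)sinθcosφ, x² = l²ρ⁻¹cosh(ψ/l)sinθsinφ, x³ = l²ρ⁻¹cosh(ψ/l)cosθ (valid where x·x < 0, with x·x = −l⁴/ρ²), the pullback of g⁺_{μν}dx^μdx^ν = (l²/(x·x)²)(η_{μρ}η_{ντ} − η_{μν}η_{ρτ})x^ρx^τ dx^μdx^ν equals dψ² − l²cosh²(ψ/l)(dθ² + sin²θ dφ²); in particular it is independent of ρ and has no dρ component. -/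
open scoped BigOperators

/-- The parametrization x⁰ = l²ρ⁻¹sinh(ψ/l), xⁱ = l²ρ⁻¹cosh(ψ/l)·(unit vector),
in coordinates y = (ρ, ψ, θ, φ), valid where x·x < 0. -/
noncomputable def F19 (l : ℝ) (y : Fin 4 → ℝ) : Fin 4 → ℝ :=
  ![l ^ 2 / y 0 * Real.sinh (y 1 / l),
    l ^ 2 / y 0 * Real.cosh (y 1 / l) * Real.sin (y 2) * Real.cos (y 3),
    l ^ 2 / y 0 * Real.cosh (y 1 / l) * Real.sin (y 2) * Real.sin (y 3),
    l ^ 2 / y 0 * Real.cosh (y 1 / l) * Real.cos (y 2)]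

/-!
Contracting `η_{μρ}η_{ντ} − η_{μν}η_{ρτ}` gives
`g⁺(u, v) = l²/(x·x)² ((x·u)(x·v) − (x·x)(u·v))`, a form whose kernel contains the
position vector `x`. The columns of the Jacobian of the parametrization are multiples of a
Minkowski-orthonormal frame whose first vector is `x/(l²/ρ)` itself (so `∂_ρ` lies in the
kernel) and whose other vectors are the `ψ`, `θ`, `φ` directions, orthogonal to `x`; the
pullback is therefore diagonal with entries read off from the scale factors.
-/

open Real

theorem fderiv_prod_coord_apply_single {ι : Type*} [Fintype ι] [DecidableEq ι]
    (g : ι → ℝ → ℝ) (g' : ι → ℝ) (y : ι → ℝ) (hg : ∀ i, HasDerivAt (g i) (g' i) (y i))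
    (a : ι) :
    fderiv ℝ (fun z : ι → ℝ => ∏ i, g i (z i)) y (Pi.single a 1) =
      ∏ i, Function.update (fun i => g i (y i)) a (g' a) i := by
  have hcoord (i : ι) : HasFDerivAt (fun z : ι → ℝ => g i (z i))
      (g' i • ContinuousLinearMap.proj (R := ℝ) (φ := fun _ : ι => ℝ) i) y :=
    (hg i).comp_hasFDerivAt y (hasFDerivAt_apply i y)
  have hprod := HasFDerivAt.finsetProd (u := Finset.univ) fun i _ => hcoord i
  rw [hprod.fderiv, Finset.prod_update_of_mem (Finset.mem_univ a)]
  simp [Pi.single_apply, Finset.sdiff_singleton_eq_erase, mul_comm]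

theorem mdot_smul_left (c : ℝ) (x y : Fin 4 → ℝ) : mdot (c • x) y = c * mdot x y := by
  simp only [mdot, Pi.smul_apply, smul_eq_mul, Finset.mul_sum]
  exact Finset.sum_congr rfl fun _ _ => by ring

theorem mdot_smul_right (c : ℝ) (x y : Fin 4 → ℝ) : mdot x (c • y) = c * mdot x y := by
  simp only [mdot, Pi.smul_apply, smul_eq_mul, Finset.mul_sum]
  exact Finset.sum_congr rfl fun _ _ => by ring

theorem sum_gten_mul_mul (l s : ℝ) (x u v : Fin 4 → ℝ) :
    ∑ μ, ∑ ν, gten l s x μ ν * u μ * v ν =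
      s * (l ^ 2 / mdot x x ^ 2) * (mdot x u * mdot x v - mdot x x * mdot u v) := by
  simp only [gten, mdot, etaM, etaS, Fin.sum_univ_four, Fin.isValue, Fin.reduceEq, ↓reduceIte]
  ring

noncomputable def dSFrame (l : ℝ) (y : Fin 4 → ℝ) : Fin 4 → Fin 4 → ℝ :=
  ![![sinh (y 1 / l), cosh (y 1 / l) * sin (y 2) * cos (y 3),
      cosh (y 1 / l) * sin (y 2) * sin (y 3), cosh (y 1 / l) * cos (y 2)],
    ![cosh (y 1 / l), sinh (y 1 / l) * sin (y 2) * cos (y 3),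
      sinh (y 1 / l) * sin (y 2) * sin (y 3), sinh (y 1 / l) * cos (y 2)],
    ![0, cos (y 2) * cos (y 3), cos (y 2) * sin (y 3), -sin (y 2)],
    ![0, -sin (y 3), cos (y 3), 0]]

noncomputable def jacScale (l : ℝ) (y : Fin 4 → ℝ) : Fin 4 → ℝ :=
  ![-(l ^ 2 / y 0 ^ 2), l / y 0, l ^ 2 / y 0 * cosh (y 1 / l),
    l ^ 2 / y 0 * cosh (y 1 / l) * sin (y 2)]

theorem mdot_dSFrame (l : ℝ) (y : Fin 4 → ℝ) (a b : Fin 4) :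
    mdot (dSFrame l y a) (dSFrame l y b) = if a = b then (if a = 1 then 1 else -1) else 0 := by
  have hψ := cosh_sq_sub_sinh_sq (y 1 / l)
  have hθ := sin_sq_add_cos_sq (y 2)
  have hφ := sin_sq_add_cos_sq (y 3)
  fin_cases a <;> fin_cases b <;> simp [mdot, dSFrame, etaS, Fin.sum_univ_four] <;> grind

theorem F19_eq_smul_dSFrame (l : ℝ) (y : Fin 4 → ℝ) :
    F19 l y = (l ^ 2 / y 0) • dSFrame l y 0 := by
  ext μ
  fin_cases μ <;> simp [F19, dSFrame] <;> ring

-- Each component of `F19` is a product of one-variable functions of `ρ, ψ, θ, φ`.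
theorem jacobian_F19 (l : ℝ) (hl : l ≠ 0) (y : Fin 4 → ℝ) (hy : y 0 ≠ 0) (a : Fin 4) :
    (fun μ => pd (fun z => F19 l z μ) a y) = jacScale l y a • dSFrame l y a := by
  funext μ
  have hρ : HasDerivAt (fun t => l ^ 2 / t) (-(l ^ 2 / y 0 ^ 2)) (y 0) := by
    simpa [div_eq_mul_inv] using (hasDerivAt_inv hy).const_mul (l ^ 2)
  have hψ : HasDerivAt (fun t => t / l) (1 / l) (y 1) := (hasDerivAt_id' _).div_const l
  have hsinh : HasDerivAt (fun t => sinh (t / l)) (cosh (y 1 / l) / l) (y 1) := by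
    simpa only [mul_one_div] using hψ.sinh
  have hcosh : HasDerivAt (fun t => cosh (t / l)) (sinh (y 1 / l) / l) (y 1) := by
    simpa only [mul_one_div] using hψ.cosh
  have hone (t : ℝ) : HasDerivAt (fun _ : ℝ => (1 : ℝ)) 0 t := hasDerivAt_const _ _
  have pd_eq (g : Fin 4 → ℝ → ℝ) (g' : Fin 4 → ℝ) (hg : ∀ i, HasDerivAt (g i) (g' i) (y i))
      (hF : ∀ z, F19 l z μ = ∏ i, g i (z i)) :
      pd (fun z => F19 l z μ) a y = ∏ i, Function.update (fun i => g i (y i)) a (g' a) i := by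
    simp only [hF]
    exact fderiv_prod_coord_apply_single g g' y hg a
  fin_cases μ <;> [
    rw [pd_eq ![fun t => l ^ 2 / t, fun t => sinh (t / l), fun _ => 1, fun _ => 1]
      ![-(l ^ 2 / y 0 ^ 2), cosh (y 1 / l) / l, 0, 0]
      (fun i => by fin_cases i <;> [exact hρ; exact hsinh; exact hone _; exact hone _])
      (fun z => by simp [F19, Fin.prod_univ_four])];
    rw [pd_eq ![fun t => l ^ 2 / t, fun t => cosh (t / l), sin, cos]
      ![-(l ^ 2 / y 0 ^ 2), sinh (y 1 / l) / l, cos (y 2), -sin (y 3)]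
      (fun i => by fin_cases i <;> [exact hρ; exact hcosh; exact hasDerivAt_sin _;
        exact hasDerivAt_cos _])
      (fun z => by simp [F19, Fin.prod_univ_four])];
    rw [pd_eq ![fun t => l ^ 2 / t, fun t => cosh (t / l), sin, sin]
      ![-(l ^ 2 / y 0 ^ 2), sinh (y 1 / l) / l, cos (y 2), cos (y 3)]
      (fun i => by fin_cases i <;> [exact hρ; exact hcosh; exact hasDerivAt_sin _;
        exact hasDerivAt_sin _])
      (fun z => by simp [F19, Fin.prod_univ_four])];
    rw [pd_eq ![fun t => l ^ 2 / t, fun t => cosh (t / l), cos, fun _ => 1]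
      ![-(l ^ 2 / y 0 ^ 2), sinh (y 1 / l) / l, -sin (y 2), 0]
      (fun i => by fin_cases i <;> [exact hρ; exact hcosh; exact hasDerivAt_cos _; exact hone _])
      (fun z => by simp [F19, Fin.prod_univ_four])]] <;>
  fin_cases a <;> simp [Fin.prod_univ_four, Function.update_apply, jacScale, dSFrame] <;>
    field_simp

/-- The pullback of g⁺_{μν}dx^μdx^ν = (l²/(x·x)²)(η_{μρ}η_{ντ} − η_{μν}η_{ρτ})x^ρx^τ dx^μdx^ν
under the above parametrization equals dψ² − l²cosh²(ψ/l)(dθ² + sin²θ dφ²); in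
particular it is independent of ρ and has no dρ component. -/
theorem pullback_g_upper (l : ℝ) (hl : 0 < l) :
    ∀ y : Fin 4 → ℝ, 0 < y 0 → ∀ a b : Fin 4,
      (∑ μ, ∑ ν, gten l 1 (F19 l y) μ ν
          * pd (fun z => F19 l z μ) a y * pd (fun z => F19 l z ν) b y) =
      (if a = 1 ∧ b = 1 then 1
       else if a = 2 ∧ b = 2 then -(l ^ 2 * Real.cosh (y 1 / l) ^ 2)
       else if a = 3 ∧ b = 3 then
         -(l ^ 2 * Real.cosh (y 1 / l) ^ 2 * Real.sin (y 2) ^ 2)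
       else 0) := by
  intro y hy a b
  rw [sum_gten_mul_mul, jacobian_F19 l hl.ne' y hy.ne', jacobian_F19 l hl.ne' y hy.ne',
    F19_eq_smul_dSFrame]
  simp only [mdot_smul_left, mdot_smul_right, mdot_dSFrame]
  fin_cases a <;> fin_cases b <;> simp [jacScale, hl.ne', hy.ne'] <;> field_simp
  ring
end
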